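/- Let p ∈ (1,∞), η ∈ (0, 2π), and let f : (−η/2, η/2) → ℝ be twice continuously differentiable with 4 f(θ)² + f'(θ)² > 0 for all θ ∈ (−η/2, η/2), and suppose f satisfies the ordinary differential equation 4 f(θ)²·[1 + 2 f(θ) + f''(θ)/p] + f'(θ)²·[1 + (2(3p−4)/p)·f(θ) + ((p−1)/p)·f''(θ)] = 0 on (−η/2, η/2). Define u on the wedge W_η by u(r cos θ, r sin θ) = r² f(θ) for r > 0 and θ ∈ (−η/2, η/2). Then |∇u(x)|² = r²·(4 f(θ)² + f'(θ)²) > 0 at every point x = (r cos θ, r sin θ) of W_η, and u satisfies (1/p)·Δu(x) + (1 − 2/p)·|∇u(x)|^{−2}·⟨∇u(x), (D²u(x))·∇u(x)⟩ = −1 for all x ∈ W_η. -/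

import Mathlib

open Set Real

/-- The planar wedge of angle `η`. -/
def wedge (η : ℝ) : Set (EuclideanSpace ℝ (Fin 2)) :=
  {x | ∃ r θ : ℝ, 0 < r ∧ -η/2 < θ ∧ θ < η/2 ∧
    x 0 = r * Real.cos θ ∧ x 1 = r * Real.sin θ}

/-- The point with polar coordinates `(r, θ)`. -/
noncomputable def ptOf (r θ : ℝ) : EuclideanSpace ℝ (Fin 2) :=
  (WithLp.equiv 2 (Fin 2 → ℝ)).symm ![r * Real.cos θ, r * Real.sin θ]

/-- The game `p`-Laplacian:
`Δ_p u (x) = (1/p)·Δu(x) + (1 − 2/p)·|∇u(x)|⁻²·⟨∇u(x), D²u(x)·∇u(x)⟩`. -/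
noncomputable def gameLap (p : ℝ) (u : EuclideanSpace ℝ (Fin 2) → ℝ)
    (x : EuclideanSpace ℝ (Fin 2)) : ℝ :=
  (1/p) * (∑ i : Fin 2,
      fderiv ℝ (fun z => gradient u z) x (EuclideanSpace.single i 1) i)
  + (1 - 2/p) * (‖gradient u x‖^2)⁻¹ *
      (inner ℝ (gradient u x) (fderiv ℝ (fun z => gradient u z) x (gradient u x)) : ℝ)

/-! Near the ray of angle `θ₀`, the polar angle is the smooth function
`localAngle θ₀ y = θ₀ + arctan (⟪J e, y⟫ / ⟪e, y⟫)`, where `e = (cos θ₀, sin θ₀)` and `J` is the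
rotation by `π/2`; its gradient is `J y / ‖y‖²`. Hence `u y = ‖y‖² f (localAngle θ₀ y)` near the
ray, `∇u y = 2 f y + f' J y` (angles evaluated at `localAngle θ₀ y`), and differentiating once more
at `x = (r cos θ, r sin θ)` gives `tr D²u = 4 f + f''` and
`⟪∇u, D²u ∇u⟫ = r² (8 f³ + 6 f f'² + f'' f'²)`, while `|∇u|² = r² (4 f² + f'²)`.
With these values, `p (4 f² + f'²) (Δ_p u + 1)` is exactly `p` times the left side of the ODE. -/

local notation "ℝ²" => EuclideanSpace ℝ (Fin 2)

open scoped RealInnerProductSpace Topology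

noncomputable def rot90 : ℝ² →L[ℝ] ℝ² :=
  Matrix.toEuclideanCLM (n := Fin 2) (𝕜 := ℝ) !![0, -1; 1, 0]

@[simp] lemma rot90_apply_zero (y : ℝ²) : rot90 y 0 = -y 1 := by
  simp [rot90, Matrix.mulVec, dotProduct, Fin.sum_univ_two]

@[simp] lemma rot90_apply_one (y : ℝ²) : rot90 y 1 = y 0 := by
  simp [rot90, Matrix.mulVec, dotProduct, Fin.sum_univ_two]

@[simp] lemma ptOf_apply_zero (r θ : ℝ) : ptOf r θ 0 = r * cos θ := rfl

@[simp] lemma ptOf_apply_one (r θ : ℝ) : ptOf r θ 1 = r * sin θ := rfl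

lemma real_inner_fin_two (x y : ℝ²) : ⟪x, y⟫ = x 0 * y 0 + x 1 * y 1 := by
  simp [PiLp.inner_apply, Fin.sum_univ_two, mul_comm]

lemma norm_sq_fin_two (y : ℝ²) : ‖y‖ ^ 2 = y 0 ^ 2 + y 1 ^ 2 := by
  simp [EuclideanSpace.real_norm_sq_eq, Fin.sum_univ_two]

lemma norm_sq_ptOf (r θ : ℝ) : ‖ptOf r θ‖ ^ 2 = r ^ 2 := by
  rw [norm_sq_fin_two, ptOf_apply_zero, ptOf_apply_one]
  linear_combination r ^ 2 * sin_sq_add_cos_sq θ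

def halfPlane (θ₀ : ℝ) : Set ℝ² := {y | 0 < ⟪ptOf 1 θ₀, y⟫}

lemma isOpen_halfPlane (θ₀ : ℝ) : IsOpen (halfPlane θ₀) :=
  isOpen_lt continuous_const (by fun_prop)

lemma ptOf_mem_halfPlane {r : ℝ} (hr : 0 < r) (θ₀ : ℝ) : ptOf r θ₀ ∈ halfPlane θ₀ := by
  simp only [halfPlane, Set.mem_ofPred_eq, real_inner_fin_two, ptOf_apply_zero, ptOf_apply_one]
  nlinarith [sin_sq_add_cos_sq θ₀]

lemma norm_pos_of_mem_halfPlane {θ₀ : ℝ} {y : ℝ²} (hy : y ∈ halfPlane θ₀) : 0 < ‖y‖ := by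
  refine norm_pos_iff.2 fun h => ?_
  simp [halfPlane, h] at hy

lemma inner_ptOf_sq_add_inner_rot90_sq (θ₀ : ℝ) (y : ℝ²) :
    ⟪ptOf 1 θ₀, y⟫ ^ 2 + ⟪rot90 (ptOf 1 θ₀), y⟫ ^ 2 = ‖y‖ ^ 2 := by
  simp only [real_inner_fin_two, norm_sq_fin_two, rot90_apply_zero, rot90_apply_one,
    ptOf_apply_zero, ptOf_apply_one]
  linear_combination (y 0 ^ 2 + y 1 ^ 2) * sin_sq_add_cos_sq θ₀

noncomputable def localAngle (θ₀ : ℝ) (y : ℝ²) : ℝ :=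
  θ₀ + arctan (⟪rot90 (ptOf 1 θ₀), y⟫ / ⟪ptOf 1 θ₀, y⟫)

lemma localAngle_ptOf (r θ₀ : ℝ) : localAngle θ₀ (ptOf r θ₀) = θ₀ := by
  have h : ⟪rot90 (ptOf 1 θ₀), ptOf r θ₀⟫ = 0 := by
    simp only [real_inner_fin_two, rot90_apply_zero, rot90_apply_one, ptOf_apply_zero,
      ptOf_apply_one]
    ring
  rw [localAngle, h, zero_div, arctan_zero, add_zero]

lemma hasFDerivAt_localAngle {θ₀ : ℝ} {y : ℝ²} (hy : y ∈ halfPlane θ₀) :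
    HasFDerivAt (localAngle θ₀) ((‖y‖ ^ 2)⁻¹ • innerSL ℝ (rot90 y)) y := by
  have hnorm := inner_ptOf_sq_add_inner_rot90_sq θ₀ y
  have hy0 : ‖y‖ ≠ 0 := (norm_pos_of_mem_halfPlane hy).ne'
  set e := ptOf 1 θ₀
  have hd : ⟪e, y⟫ ≠ 0 := ne_of_gt hy
  have hquot : HasFDerivAt (fun z => ⟪rot90 e, z⟫ * ⟪e, z⟫⁻¹)
      (⟪rot90 e, y⟫ • (-(⟪e, y⟫ ^ 2)⁻¹ • innerSL ℝ e) + ⟪e, y⟫⁻¹ • innerSL ℝ (rot90 e)) y :=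
    (innerSL ℝ (rot90 e)).hasFDerivAt.mul
      ((hasDerivAt_inv hd).comp_hasFDerivAt y (innerSL ℝ e).hasFDerivAt)
  refine (hquot.arctan.const_add θ₀).congr_fderiv (ContinuousLinearMap.ext fun w => ?_)
  have hcross : ⟪e, y⟫ * ⟪rot90 e, w⟫ - ⟪rot90 e, y⟫ * ⟪e, w⟫ = ⟪rot90 y, w⟫ := by
    simp only [e, real_inner_fin_two, rot90_apply_zero, rot90_apply_one, ptOf_apply_zero,
      ptOf_apply_one]
    linear_combination (y 0 * w 1 - y 1 * w 0) * sin_sq_add_cos_sq θ₀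
  have harctan : 1 / (1 + (⟪rot90 e, y⟫ * ⟪e, y⟫⁻¹) ^ 2) = ⟪e, y⟫ ^ 2 / ‖y‖ ^ 2 := by
    rw [← hnorm]
    field_simp
  simp only [add_apply, smul_apply, innerSL_apply_apply, smul_eq_mul, harctan, ← hcross]
  field_simp
  ring

lemma ptOf_norm_localAngle {θ₀ : ℝ} {y : ℝ²} (hy : y ∈ halfPlane θ₀) :
    ptOf ‖y‖ (localAngle θ₀ y) = y := by
  have hnorm := inner_ptOf_sq_add_inner_rot90_sq θ₀ y
  have hy0 : ‖y‖ ≠ 0 := (norm_pos_of_mem_halfPlane hy).ne'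
  set d := ⟪ptOf 1 θ₀, y⟫
  set a := ⟪rot90 (ptOf 1 θ₀), y⟫
  have hd : 0 < d := hy
  have hsqrt : √(1 + (a / d) ^ 2) = ‖y‖ / d := by
    have h : 1 + (a / d) ^ 2 = (‖y‖ / d) ^ 2 := by rw [div_pow, div_pow, ← hnorm]; field_simp
    rw [h]
    exact sqrt_sq (by positivity)
  have hcs := sin_sq_add_cos_sq θ₀
  have hd' : d = cos θ₀ * y 0 + sin θ₀ * y 1 := by simp [d, real_inner_fin_two]
  have ha' : a = -sin θ₀ * y 0 + cos θ₀ * y 1 := by simp [a, real_inner_fin_two]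
  ext i
  fin_cases i
  · show ‖y‖ * cos (θ₀ + arctan (a / d)) = y 0
    rw [cos_add, cos_arctan, sin_arctan, hsqrt]
    field_simp
    rw [hd', ha']
    linear_combination y 0 * hcs
  · show ‖y‖ * sin (θ₀ + arctan (a / d)) = y 1
    rw [sin_add, cos_arctan, sin_arctan, hsqrt]
    field_simp
    rw [hd', ha']
    linear_combination y 1 * hcs

noncomputable def polarGradient (f f' : ℝ → ℝ) (θ₀ : ℝ) (y : ℝ²) : ℝ² :=
  (2 * f (localAngle θ₀ y)) • y + f' (localAngle θ₀ y) • rot90 y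

lemma hasGradientAt_polarGradient {f f' : ℝ → ℝ} {θ₀ : ℝ} {y : ℝ²} (hy : y ∈ halfPlane θ₀)
    (hf : HasDerivAt f (f' (localAngle θ₀ y)) (localAngle θ₀ y)) :
    HasGradientAt (fun z => ‖z‖ ^ 2 * f (localAngle θ₀ z)) (polarGradient f f' θ₀ y) y := by
  have hy0 : ‖y‖ ≠ 0 := (norm_pos_of_mem_halfPlane hy).ne'
  rw [hasGradientAt_iff_hasFDerivAt]
  refine ((hasStrictFDerivAt_norm_sq y).hasFDerivAt.mul
    (hf.comp_hasFDerivAt y (hasFDerivAt_localAngle hy))).congr_fderiv ?_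
  ext w
  simp only [polarGradient, add_apply, smul_apply, innerSL_apply_apply,
    InnerProductSpace.toDual_apply_apply, inner_add_left, real_inner_smul_left, smul_eq_mul,
    nsmul_eq_mul, Function.comp_apply]
  field_simp
  ring

noncomputable def polarHessian (f f' f'' : ℝ → ℝ) (a : ℝ) (y : ℝ²) : ℝ² →L[ℝ] ℝ² :=
  (2 * f a) • ContinuousLinearMap.id ℝ ℝ²
    + (2 * f' a * (‖y‖ ^ 2)⁻¹) • (innerSL ℝ (rot90 y)).smulRight y
    + (f' a • rot90 + (f'' a * (‖y‖ ^ 2)⁻¹) • (innerSL ℝ (rot90 y)).smulRight (rot90 y))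

lemma hasFDerivAt_polarGradient {f f' f'' : ℝ → ℝ} {θ₀ : ℝ} {y : ℝ²} (hy : y ∈ halfPlane θ₀)
    (hf : HasDerivAt f (f' (localAngle θ₀ y)) (localAngle θ₀ y))
    (hf' : HasDerivAt f' (f'' (localAngle θ₀ y)) (localAngle θ₀ y)) :
    HasFDerivAt (polarGradient f f' θ₀) (polarHessian f f' f'' (localAngle θ₀ y) y) y := by
  have hA := hasFDerivAt_localAngle hy
  refine ((((hf.comp_hasFDerivAt y hA).const_mul 2).smul (hasFDerivAt_id y)).add
    ((hf'.comp_hasFDerivAt y hA).smul rot90.hasFDerivAt)).congr_fderiv ?_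
  refine ContinuousLinearMap.ext fun w => ?_
  simp only [polarHessian, add_apply, smul_apply, ContinuousLinearMap.smulRight_apply,
    innerSL_apply_apply, ContinuousLinearMap.id_apply, Function.comp_apply, smul_eq_mul, id_eq]
  module

section OnRay

variable (f f' f'' : ℝ → ℝ) {r : ℝ} (θ : ℝ)

lemma norm_sq_polarGradient_ptOf :
    ‖polarGradient f f' θ (ptOf r θ)‖ ^ 2 = r ^ 2 * (4 * f θ ^ 2 + f' θ ^ 2) := by
  rw [norm_sq_fin_two]
  simp only [polarGradient, localAngle_ptOf, PiLp.add_apply, PiLp.smul_apply, smul_eq_mul,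
    rot90_apply_zero, rot90_apply_one, ptOf_apply_zero, ptOf_apply_one]
  linear_combination r ^ 2 * (4 * f θ ^ 2 + f' θ ^ 2) * sin_sq_add_cos_sq θ

lemma trace_polarHessian_ptOf (hr : r ≠ 0) :
    ∑ i, polarHessian f f' f'' θ (ptOf r θ) (EuclideanSpace.single i 1) i = 4 * f θ + f'' θ := by
  simp only [polarHessian, norm_sq_ptOf, Fin.sum_univ_two, add_apply, smul_apply,
    ContinuousLinearMap.smulRight_apply, innerSL_apply_apply, ContinuousLinearMap.id_apply,
    real_inner_fin_two, PiLp.add_apply, PiLp.smul_apply, smul_eq_mul, rot90_apply_zero, rot90_apply_one, ptOf_apply_zero, ptOf_apply_one,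
    PiLp.single_apply, if_pos, zero_ne_one, one_ne_zero, if_false]
  field_simp
  linear_combination f'' θ * sin_sq_add_cos_sq θ

lemma inner_polarHessian_ptOf (hr : r ≠ 0) :
    ⟪polarGradient f f' θ (ptOf r θ),
        polarHessian f f' f'' θ (ptOf r θ) (polarGradient f f' θ (ptOf r θ))⟫
      = r ^ 2 * (8 * f θ ^ 3 + 6 * f θ * f' θ ^ 2 + f'' θ * f' θ ^ 2) := by
  simp only [polarHessian, polarGradient, localAngle_ptOf, norm_sq_ptOf, add_apply, smul_apply,
    ContinuousLinearMap.smulRight_apply, innerSL_apply_apply, ContinuousLinearMap.id_apply,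
    real_inner_fin_two, PiLp.add_apply, PiLp.smul_apply, smul_eq_mul, rot90_apply_zero, rot90_apply_one, ptOf_apply_zero, ptOf_apply_one]
  field_simp
  linear_combination (8 * f θ ^ 3 + f' θ ^ 2 * f'' θ * (sin θ ^ 2 + cos θ ^ 2 + 1)
    + f θ * f' θ ^ 2 * (4 * (sin θ ^ 2 + cos θ ^ 2) + 6)) * sin_sq_add_cos_sq θ

end OnRay

lemma gameLap_eq_of_hasFDerivAt {p : ℝ} {u : ℝ² → ℝ} {x : ℝ²} {G : ℝ² → ℝ²} {D : ℝ² →L[ℝ] ℝ²}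
    (hG : gradient u =ᶠ[𝓝 x] G) (hD : HasFDerivAt G D x) :
    gameLap p u x = (1 / p) * (∑ i, D (EuclideanSpace.single i 1) i)
      + (1 - 2 / p) * (‖G x‖ ^ 2)⁻¹ * ⟪G x, D (G x)⟫ := by
  have hDu : fderiv ℝ (fun z => gradient u z) x = D := hG.fderiv_eq.trans hD.fderiv
  rw [gameLap, hDu, hG.eq_of_nhds]

lemma gradient_eventuallyEq_polarGradient {f f' : ℝ → ℝ} {u : ℝ² → ℝ} {I : Set ℝ} (hI : IsOpen I)
    (hf : ∀ θ ∈ I, HasDerivAt f (f' θ) θ)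
    (hu : ∀ r θ : ℝ, 0 < r → θ ∈ I → u (ptOf r θ) = r ^ 2 * f θ)
    {r θ : ℝ} (hr : 0 < r) (hθ : θ ∈ I) :
    gradient u =ᶠ[𝓝 (ptOf r θ)] polarGradient f f' θ := by
  set N := halfPlane θ ∩ localAngle θ ⁻¹' I
  have hN : IsOpen N := ContinuousOn.isOpen_inter_preimage
    (fun y hy => (hasFDerivAt_localAngle hy).continuousAt.continuousWithinAt)
    (isOpen_halfPlane θ) hI
  have huN : ∀ y ∈ N, u y = ‖y‖ ^ 2 * f (localAngle θ y) := fun y hy => by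
    conv_lhs => rw [← ptOf_norm_localAngle hy.1]
    exact hu _ _ (norm_pos_of_mem_halfPlane hy.1) hy.2
  have hxN : ptOf r θ ∈ N := ⟨ptOf_mem_halfPlane hr θ, by simpa [localAngle_ptOf] using hθ⟩
  filter_upwards [hN.mem_nhds hxN] with y hy
  exact ((hasGradientAt_polarGradient hy.1 (hf _ hy.2)).congr_of_eventuallyEq
    (Filter.eventuallyEq_of_mem (hN.mem_nhds hy) huN)).gradient

theorem ode_gives_pde_solution_general
    (p η : ℝ) (hp : 1 < p)
    (f f' f'' : ℝ → ℝ)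
    (hf' : ∀ θ ∈ Set.Ioo (-η/2) (η/2), HasDerivAt f (f' θ) θ)
    (hf'' : ∀ θ ∈ Set.Ioo (-η/2) (η/2), HasDerivAt f' (f'' θ) θ)
    (hpos : ∀ θ ∈ Set.Ioo (-η/2) (η/2), 0 < 4*(f θ)^2 + (f' θ)^2)
    (hode : ∀ θ ∈ Set.Ioo (-η/2) (η/2),
      4*(f θ)^2 * (1 + 2*f θ + f'' θ / p)
        + (f' θ)^2 * (1 + (2*(3*p-4)/p)*f θ + ((p-1)/p)*f'' θ) = 0)
    (u : EuclideanSpace ℝ (Fin 2) → ℝ)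
    (hu : ∀ r θ : ℝ, 0 < r → θ ∈ Set.Ioo (-η/2) (η/2) → u (ptOf r θ) = r^2 * f θ) :
    ∀ r θ : ℝ, 0 < r → θ ∈ Set.Ioo (-η/2) (η/2) →
      ‖gradient u (ptOf r θ)‖^2 = r^2 * (4*(f θ)^2 + (f' θ)^2) ∧
      0 < ‖gradient u (ptOf r θ)‖^2 ∧
      gameLap p u (ptOf r θ) = -1 := by
  intro r θ hr hθ
  have hG := gradient_eventuallyEq_polarGradient isOpen_Ioo hf' hu hr hθ
  have hD := hasFDerivAt_polarGradient (f'' := f'') (ptOf_mem_halfPlane hr θ)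
    (by rw [localAngle_ptOf]; exact hf' θ hθ) (by rw [localAngle_ptOf]; exact hf'' θ hθ)
  rw [localAngle_ptOf] at hD
  have hnorm : ‖gradient u (ptOf r θ)‖ ^ 2 = r ^ 2 * (4 * f θ ^ 2 + f' θ ^ 2) := by
    rw [hG.eq_of_nhds, norm_sq_polarGradient_ptOf]
  refine ⟨hnorm, hnorm ▸ mul_pos (pow_pos hr 2) (hpos θ hθ), ?_⟩
  rw [gameLap_eq_of_hasFDerivAt hG hD, trace_polarHessian_ptOf _ _ _ _ hr.ne',
    inner_polarHessian_ptOf _ _ _ _ hr.ne', norm_sq_polarGradient_ptOf]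
  have hodeθ := hode θ hθ
  have hp0 : p ≠ 0 := (zero_lt_one.trans hp).ne'
  have hS := (hpos θ hθ).ne'
  field_simp at hodeθ ⊢
  linear_combination hodeθ

theorem ode_gives_pde_solution
    (p η : ℝ) (hp : 1 < p) (hη : η ∈ Set.Ioo 0 (2*Real.pi))
    (f f' f'' : ℝ → ℝ)
    (hf' : ∀ θ ∈ Set.Ioo (-η/2) (η/2), HasDerivAt f (f' θ) θ)
    (hf'' : ∀ θ ∈ Set.Ioo (-η/2) (η/2), HasDerivAt f' (f'' θ) θ)
    (hf''c : ContinuousOn f'' (Set.Ioo (-η/2) (η/2)))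
    (hpos : ∀ θ ∈ Set.Ioo (-η/2) (η/2), 0 < 4*(f θ)^2 + (f' θ)^2)
    (hode : ∀ θ ∈ Set.Ioo (-η/2) (η/2),
      4*(f θ)^2 * (1 + 2*f θ + f'' θ / p)
        + (f' θ)^2 * (1 + (2*(3*p-4)/p)*f θ + ((p-1)/p)*f'' θ) = 0)
    (u : EuclideanSpace ℝ (Fin 2) → ℝ)
    (hu : ∀ r θ : ℝ, 0 < r → θ ∈ Set.Ioo (-η/2) (η/2) → u (ptOf r θ) = r^2 * f θ) :
    ∀ r θ : ℝ, 0 < r → θ ∈ Set.Ioo (-η/2) (η/2) →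
      ‖gradient u (ptOf r θ)‖^2 = r^2 * (4*(f θ)^2 + (f' θ)^2) ∧
      0 < ‖gradient u (ptOf r θ)‖^2 ∧
      gameLap p u (ptOf r θ) = -1 :=
  ode_gives_pde_solution_general p η hp f f' f'' hf' hf'' hpos hode u hu
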